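/- Let L = p^{-1}Z_p ⊕ Z_p ⊕ Z_p ⊕ Z_p with the standard symplectic pairing. For every primitive element x ∈ L of type (II), there exists a primitive element y ∈ L of type (II) with ⟨x,y⟩ = 1. -/

import Mathlib

/-- The paramodular lattice `L = p⁻¹ℤ_p ⊕ ℤ_p ⊕ ℤ_p ⊕ ℤ_p ⊆ ℚ_p⁴` is identified with `ℤ_p⁴`
via `(a,b,c,d) ↦ (p⁻¹a, b, c, d)`.  Under this identification the standard symplectic pairing
`⟨x,y⟩ = x₁y₄ + x₂y₃ − x₃y₂ − x₄y₁` becomes the following `ℚ_p`-valued pairing on `ℤ_p⁴`. -/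
noncomputable def spPara (p : ℕ) [Fact p.Prime] (u v : Fin 4 → ℤ_[p]) : ℚ_[p] :=
  ((u 0 * v 3 : ℤ_[p]) : ℚ_[p]) / (p : ℚ_[p]) + ((u 1 * v 2 : ℤ_[p]) : ℚ_[p])
    - ((u 2 * v 1 : ℤ_[p]) : ℚ_[p]) - ((u 3 * v 0 : ℤ_[p]) : ℚ_[p]) / (p : ℚ_[p])

/-- `x ∈ L` is primitive if `x ∉ pL`. -/
def ParaPrimitive (p : ℕ) [Fact p.Prime] (x : Fin 4 → ℤ_[p]) : Prop :=
  ¬ ∀ i, (p : ℤ_[p]) ∣ x i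

/-- A primitive element of type (I): `⟨x,y⟩ ∈ p⁻¹ℤ_p ∖ ℤ_p` for some `y ∈ L`. -/
def PrimTypeI (p : ℕ) [Fact p.Prime] (x : Fin 4 → ℤ_[p]) : Prop :=
  ParaPrimitive p x ∧ ∃ y : Fin 4 → ℤ_[p], ¬ ‖spPara p x y‖ ≤ 1

/-- A primitive element of type (II): `⟨x,y⟩ ∈ ℤ_p` for every `y ∈ L`. -/
def PrimTypeII (p : ℕ) [Fact p.Prime] (x : Fin 4 → ℤ_[p]) : Prop :=
  ParaPrimitive p x ∧ ∀ y : Fin 4 → ℤ_[p], ‖spPara p x y‖ ≤ 1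

/-! In the coordinates of `spPara`, type (II) means exactly that `p` divides the first and last
coordinates, and then `⟨x, y⟩` reduces on vectors `y = (0, -t, s, 0)` to `s x₂ + t x₃`. Since such
an `x` is primitive, `x₂` or `x₃` is a unit of the local ring `ℤ_p`, so `s x₂ + t x₃ = 1` is
solvable; the resulting `y` is of type (II), and primitive because `s` and `t` are coprime. -/

namespace PadicInt

variable {p : ℕ} [Fact p.Prime]

theorem isUnit_iff_not_dvd {z : ℤ_[p]} : IsUnit z ↔ ¬(p : ℤ_[p]) ∣ z := by
  rw [← norm_lt_one_iff_dvd, ← not_isUnit_iff, not_not]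

theorem isCoprime_of_not_p_dvd_and_p_dvd {a b : ℤ_[p]}
    (h : ¬((p : ℤ_[p]) ∣ a ∧ (p : ℤ_[p]) ∣ b)) : IsCoprime a b := by
  by_cases ha : (p : ℤ_[p]) ∣ a
  · have hb : IsUnit b := isUnit_iff_not_dvd.mpr fun hb => h ⟨ha, hb⟩
    exact ⟨0, ↑hb.unit⁻¹, by simp⟩
  · have ha : IsUnit a := isUnit_iff_not_dvd.mpr ha
    exact ⟨↑ha.unit⁻¹, 0, by simp⟩

theorem dvd_of_norm_div_p_le_one {z : ℤ_[p]} (h : ‖(z : ℚ_[p]) / p‖ ≤ 1) : (p : ℤ_[p]) ∣ z := by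
  rw [norm_div, Padic.norm_p, div_inv_eq_mul] at h
  have hp : (1 : ℝ) < p := mod_cast (Fact.out : p.Prime).one_lt
  rw [← norm_lt_one_iff_dvd, norm_def]
  nlinarith [norm_nonneg (z : ℚ_[p])]

end PadicInt

section Paramodular

variable {p : ℕ} [Fact p.Prime]

theorem spPara_eq_of_eq_p_mul {x : Fin 4 → ℤ_[p]} {a d : ℤ_[p]} (ha : x 0 = p * a)
    (hd : x 3 = p * d) (y : Fin 4 → ℤ_[p]) :
    spPara p x y = ((a * y 3 + x 1 * y 2 - x 2 * y 1 - d * y 0 : ℤ_[p]) : ℚ_[p]) := by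
  have hp : (p : ℚ_[p]) ≠ 0 := Nat.cast_ne_zero.mpr (Fact.out : p.Prime).ne_zero
  simp only [spPara, ha, hd, PadicInt.coe_mul, PadicInt.coe_sub, PadicInt.coe_add,
    PadicInt.coe_natCast]
  field_simp

theorem primTypeII_iff {x : Fin 4 → ℤ_[p]} :
    PrimTypeII p x ↔ ParaPrimitive p x ∧ (p : ℤ_[p]) ∣ x 0 ∧ (p : ℤ_[p]) ∣ x 3 := by
  constructor
  · rintro ⟨hprim, hint⟩
    refine ⟨hprim, PadicInt.dvd_of_norm_div_p_le_one ?_, PadicInt.dvd_of_norm_div_p_le_one ?_⟩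
    · simpa [spPara] using hint ![0, 0, 0, 1]
    · simpa [spPara] using hint ![1, 0, 0, 0]
  · rintro ⟨hprim, ⟨a, ha⟩, ⟨d, hd⟩⟩
    refine ⟨hprim, fun y => ?_⟩
    rw [spPara_eq_of_eq_p_mul ha hd, ← PadicInt.norm_def]
    exact PadicInt.norm_le_one _

theorem paraPrimitive_of_isCoprime {y : Fin 4 → ℤ_[p]} {i j : Fin 4} (h : IsCoprime (y i) (y j)) :
    ParaPrimitive p y :=
  fun hdvd => PadicInt.prime_p.not_isUnit (h.isUnit_of_dvd' (hdvd i) (hdvd j))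

theorem PrimTypeII.isCoprime {x : Fin 4 → ℤ_[p]} (hx : PrimTypeII p x) :
    IsCoprime (x 1) (x 2) := by
  obtain ⟨hprim, h0, h3⟩ := primTypeII_iff.mp hx
  refine PadicInt.isCoprime_of_not_p_dvd_and_p_dvd fun ⟨h1, h2⟩ => hprim fun i => ?_
  fin_cases i <;> assumption

end Paramodular

/-- For every primitive element `x ∈ L` of type (II) there exists a primitive element
`y ∈ L` of type (II) with `⟨x,y⟩ = 1`. -/
theorem typeII_exists_dual_typeII
    (p : ℕ) [Fact p.Prime] (x : Fin 4 → ℤ_[p]) (hx : PrimTypeII p x) :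
    ∃ y : Fin 4 → ℤ_[p], PrimTypeII p y ∧ spPara p x y = 1 := by
  obtain ⟨-, ⟨a, ha⟩, ⟨d, hd⟩⟩ := primTypeII_iff.mp hx
  obtain ⟨s, t, hst⟩ := hx.isCoprime
  have hprim : ParaPrimitive p ![0, -t, s, 0] :=
    paraPrimitive_of_isCoprime (i := 2) (j := 1)
      ⟨x 1, -x 2, show x 1 * s + -x 2 * -t = 1 by linear_combination hst⟩
  refine ⟨![0, -t, s, 0], primTypeII_iff.mpr ⟨hprim, dvd_zero _, dvd_zero _⟩, ?_⟩
  have hpair : a * 0 + x 1 * s - x 2 * -t - d * 0 = 1 := by linear_combination hst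
  rw [spPara_eq_of_eq_p_mul ha hd]
  exact (congrArg _ hpair).trans PadicInt.coe_one
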